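/- Abstract region-covering lemma (Lemma 1, combinatorial core): Let M ≥ 3 and let real numbers A₂, A₃, ..., A_M, B₃, ..., B_M, and γ be given such that γ = B_i + A_{i-1} for every i ∈ {3,...,M}. Then for any reals R₁, R_M satisfying R₁ < A_M, R_M < B₃, and R₁ + R_M < γ, there exists i ∈ {3,...,M} such that R₁ < A_i, R_M < B_i, and R₁ + R_M < γ. -/
import Mathlib

/-- Combinatorial core of Lemma 1 (region covering): if `γ = B i + A (i-1)` for every
`i ∈ {3,…,M}`, then any rate pair `(R₁, R_M)` with `R₁ < A M`, `R_M < B 3` and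
`R₁ + R_M < γ` satisfies, for some `i ∈ {3,…,M}`, `R₁ < A i`, `R_M < B i`, and
`R₁ + R_M < γ`. -/
theorem region_covering (M : ℕ) (hM : 3 ≤ M) (A B : ℕ → ℝ) (γ R₁ RM : ℝ)
    (hchain : ∀ i ∈ Finset.Icc 3 M, γ = B i + A (i - 1))
    (h1 : R₁ < A M) (h2 : RM < B 3) (h3 : R₁ + RM < γ) :
    ∃ i ∈ Finset.Icc 3 M, R₁ < A i ∧ RM < B i ∧ R₁ + RM < γ := by
  have hP : ∃ i, 3 ≤ i ∧ i ≤ M ∧ R₁ < A i := ⟨M, hM, le_refl M, h1⟩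
  classical
  set i := Nat.find hP with hi
  obtain ⟨h3i, hiM, hRA⟩ := Nat.find_spec hP
  refine ⟨i, Finset.mem_Icc.mpr ⟨h3i, hiM⟩, hRA, ?_, h3⟩
  rcases eq_or_lt_of_le h3i with h | h
  · rw [hi, ← h]; exact h2
  · have hmin : ¬ (3 ≤ i - 1 ∧ i - 1 ≤ M ∧ R₁ < A (i - 1)) :=
      Nat.find_min hP (by omega)
    have h31 : 3 ≤ i - 1 := by omega
    have h1M : i - 1 ≤ M := by omega
    have hA : A (i - 1) ≤ R₁ := by
      by_contra hc
      exact hmin ⟨h31, h1M, lt_of_not_ge hc⟩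
    have hg := hchain i (Finset.mem_Icc.mpr ⟨h3i, hiM⟩)
    linarith
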